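/- arXiv:1704.06368 — 6 statements merged into one kernel-verified Lean document; each statement's English description precedes it below -/
import Mathlib

section
/- Let K be a closed convex cone in a finite-dimensional Euclidean space E that is facially dual complete (i.e., K* + F^⊥ is closed for every proper face F of K). Then for every proper face F of K and every point x ∈ F, the tangent cone to K at x intersected with the linear span of F equals the tangent cone to F at x: T(x;K) ∩ span(F) = T(x;F). -/
/- Common definitions following "Facially Dual Complete (Nice) cones and
lexicographic tangents" by V. Roshchina and L. Tunçel. -/

open Set Filter
open scoped Pointwise

local notation "⟪" x ", " y "⟫" => @inner ℝ _ _ x y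

variable {E : Type*} [NormedAddCommGroup E] [InnerProductSpace ℝ E]

/-- The tangent cone to a set `C` at `x`: the closure of the cone of feasible
directions `{d : x + ε • d ∈ C for some ε > 0}`. -/
def TangCone (x : E) (C : Set E) : Set E :=
  closure {d : E | ∃ ε : ℝ, 0 < ε ∧ x + ε • d ∈ C}

/-- `F` is a face of the convex set `C`: a closed convex subset such that any open
segment of `C` whose interior meets `F` has both endpoints in `F`. -/
def IsFaceOf (F C : Set E) : Prop :=
  F ⊆ C ∧ Convex ℝ F ∧ IsClosed F ∧
    ∀ x ∈ F, ∀ y ∈ C, ∀ z ∈ C, x ∈ openSegment ℝ y z → y ∈ F ∧ z ∈ F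

/-- A proper face: a nonempty face different from the whole set. -/
def IsProperFaceOf (F C : Set E) : Prop := IsFaceOf F C ∧ F.Nonempty ∧ F ≠ C

/-- The dual cone `K* = {s : ⟨s,x⟩ ≥ 0 for all x ∈ K}`. -/
def DualCone' (K : Set E) : Set E := {s : E | ∀ x ∈ K, 0 ≤ ⟪s, x⟫}

/-- `F^⊥ = {s : ⟨s,x⟩ = 0 for all x ∈ F}`. -/
def PerpOf (F : Set E) : Set E := {s : E | ∀ x ∈ F, ⟪s, x⟫ = 0}

/-- Facial dual completeness: `K* + F^⊥` is closed for every proper face `F` of `K`. -/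
def IsFDC (K : Set E) : Prop :=
  ∀ F : Set E, IsProperFaceOf F K → IsClosed (DualCone' K + PerpOf F)

/-- Tangential exposure: `T(x;C) ∩ span F = T(x;F)` for every proper face `F` and `x ∈ F`. -/
def TangentiallyExposed (C : Set E) : Prop :=
  ∀ F : Set E, IsProperFaceOf F C → ∀ x ∈ F,
    TangCone x C ∩ (Submodule.span ℝ F : Set E) = TangCone x F

/-- The family of all tangent cones of members of a family of sets. -/
def TangFamily (𝒦 : Set (Set E)) : Set (Set E) :=
  {T | ∃ C ∈ 𝒦, ∃ x ∈ C, T = TangCone x C}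

/-- `𝒯^k(C)`: the `k`-fold iterated tangent-cone families of `C`;
its members are the lexicographic tangent cones (of order `k`) of `C`. -/
def TangIter (C : Set E) : ℕ → Set (Set E)
  | 0 => {C}
  | k + 1 => TangFamily (TangIter C k)

/-- Strong tangential exposure: `C` and all of its lexicographic tangent cones are
tangentially exposed. -/
def StronglyTangentiallyExposed (C : Set E) : Prop :=
  ∀ k : ℕ, ∀ T ∈ TangIter C k, TangentiallyExposed T

/-- `F` is an exposed face of `C`: the set of maximizers over `C` of some linear functional. -/
def IsExposedFaceOf (F C : Set E) : Prop :=
  ∃ p : E, F = {x ∈ C | ∀ y ∈ C, ⟪p, y⟫ ≤ ⟪p, x⟫}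

/-- `C` is facially exposed: every proper face of `C` is exposed. -/
def FaciallyExposed (C : Set E) : Prop :=
  ∀ F : Set E, IsProperFaceOf F C → IsExposedFaceOf F C

/-- The normal cone to `C` at `x`. -/
def NormalCone' (x : E) (C : Set E) : Set E := {s : E | ∀ y ∈ C, ⟪s, y - x⟫ ≤ 0}

/-- The minimal face of `C` containing `S`. -/
def MinimalFace (S C : Set E) : Set E := ⋂₀ {F : Set E | IsFaceOf F C ∧ S ⊆ F}

/-- `K` is a cone: closed under positive scalar multiplication. -/
def IsConeSet (K : Set E) : Prop := ∀ c : ℝ, 0 < c → ∀ x ∈ K, c • x ∈ K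

/-!
For a closed convex cone `C` and `x ∈ C`, the bipolar theorem gives `T(x;C) = (C* ∩ x^⊥)*`.
A face `F` of `K` is `K ∩ span F`, so bipolarity gives `F* = cl (K* + F^⊥)`, which is
`K* + F^⊥` by facial dual completeness. Hence every `s ∈ F* ∩ x^⊥` splits as `u + v` with
`u ∈ K* ∩ x^⊥` and `v ∈ F^⊥`, and for `d ∈ T(x;K) ∩ span F` we get `⟪u, d⟫ ≥ 0` and
`⟪v, d⟫ = 0`, i.e. `d ∈ T(x;F)`.
-/

theorem IsConeSet.add_mem {S : Set E} (hconv : Convex ℝ S) (hcone : IsConeSet S) {x y : E}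
    (hx : x ∈ S) (hy : y ∈ S) : x + y ∈ S := by
  have h := hcone 2 two_pos _ (hconv.midpoint_mem hx hy)
  rwa [midpoint_eq_smul_add, smul_smul, mul_invOf_self, one_smul] at h

def IsConeSet.toConvexCone {S : Set E} (hconv : Convex ℝ S) (hcone : IsConeSet S) :
    ConvexCone ℝ E where
  carrier := S
  smul_mem' _ hc _ hx := hcone _ hc _ hx
  add_mem' _ hx _ hy := hcone.add_mem hconv hx hy

theorem IsConeSet.zero_mem {S : Set E} (hne : S.Nonempty) (hclosed : IsClosed S)
    (hconv : Convex ℝ S) (hcone : IsConeSet S) : (0 : E) ∈ S :=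
  ConvexCone.Pointed.of_nonempty_of_isClosed (C := hcone.toConvexCone hconv) hne hclosed

theorem Submodule.isConeSet (V : Submodule ℝ E) : IsConeSet (V : Set E) :=
  fun c _ _ hx => V.smul_mem c hx

theorem IsConeSet.add {A B : Set E} (hA : IsConeSet A) (hB : IsConeSet B) :
    IsConeSet (A + B) := by
  rintro c hc _ ⟨a, ha, b, hb, rfl⟩
  rw [smul_add]
  exact add_mem_add (hA c hc a ha) (hB c hc b hb)

theorem isConeSet_dualCone' (S : Set E) : IsConeSet (DualCone' S) := fun c hc s hs y hy => by
  rw [real_inner_smul_left]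
  exact mul_nonneg hc.le (hs y hy)

theorem convex_dualCone' (S : Set E) : Convex ℝ (DualCone' S) := by
  intro s hs t ht a b ha hb _ y hy
  rw [inner_add_left, real_inner_smul_left, real_inner_smul_left]
  exact add_nonneg (mul_nonneg ha (hs y hy)) (mul_nonneg hb (ht y hy))

theorem dualCone'_closure (S : Set E) : DualCone' (closure S) = DualCone' S := by
  refine Subset.antisymm (fun s hs y hy => hs y (subset_closure hy)) fun s hs => ?_
  exact closure_minimal (t := {y | 0 ≤ ⟪s, y⟫}) hs
    (isClosed_le continuous_const (continuous_const.inner continuous_id))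

theorem dualCone'_add {A B : Set E} (h0A : (0 : E) ∈ A) (h0B : (0 : E) ∈ B) :
    DualCone' (A + B) = DualCone' A ∩ DualCone' B := by
  refine Subset.antisymm (fun s hs => ⟨fun a ha => ?_, fun b hb => ?_⟩) ?_
  · simpa using hs (a + 0) (add_mem_add ha h0B)
  · simpa using hs (0 + b) (add_mem_add h0A hb)
  · rintro s ⟨hsA, hsB⟩ _ ⟨a, ha, b, hb, rfl⟩
    rw [inner_add_right]
    exact add_nonneg (hsA a ha) (hsB b hb)

theorem dualCone'_submodule (V : Submodule ℝ E) : DualCone' (V : Set E) = (Vᗮ : Set E) := by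
  refine Subset.antisymm (fun s hs => (V.mem_orthogonal' s).2 fun y hy => ?_) fun s hs y hy => ?_
  · have h := hs (-y) (V.neg_mem hy)
    rw [inner_neg_right] at h
    exact le_antisymm (by linarith) (hs y hy)
  · rw [real_inner_comm]
    exact (Submodule.inner_right_of_mem_orthogonal hy hs).ge

theorem perpOf_eq_orthogonal (F : Set E) : PerpOf F = ((Submodule.span ℝ F)ᗮ : Set E) := by
  ext s
  rw [SetLike.mem_coe, Submodule.mem_orthogonal']
  exact ⟨fun h y hy => Submodule.span_le (p := LinearMap.ker (innerₛₗ ℝ s)) |>.2 h hy,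
    fun h y hy => h y (Submodule.subset_span hy)⟩

theorem dualCone'_perpOf (F : Set E) [(Submodule.span ℝ F).HasOrthogonalProjection] :
    DualCone' (PerpOf F) = Submodule.span ℝ F := by
  rw [perpOf_eq_orthogonal, dualCone'_submodule, Submodule.orthogonal_orthogonal]

theorem coe_innerDual_eq_dualCone' [CompleteSpace E] (S : Set E) :
    (ProperCone.innerDual S : Set E) = DualCone' S := by
  ext s
  simp only [SetLike.mem_coe, ProperCone.mem_innerDual, DualCone', mem_ofPred_eq,
    real_inner_comm s]

theorem dualCone'_dualCone' [CompleteSpace E] {S : Set E} (hne : S.Nonempty)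
    (hconv : Convex ℝ S) (hcone : IsConeSet S) : DualCone' (DualCone' S) = closure S := by
  obtain ⟨P, hP⟩ : ∃ P : ProperCone ℝ E, (P : Set E) = closure S := by
    have hC : ((hcone.toConvexCone hconv).closure : Set E) = closure S := rfl
    lift (hcone.toConvexCone hconv).closure to ProperCone ℝ E using
      ⟨hC ▸ hne.closure, hC ▸ isClosed_closure⟩ with P
    exact ⟨P, hC⟩
  rw [← dualCone'_closure S, ← hP, ← coe_innerDual_eq_dualCone', ← coe_innerDual_eq_dualCone',
    ProperCone.innerDual_innerDual]

def FeasibleDirections (x : E) (C : Set E) : Set E :=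
  {d : E | ∃ ε : ℝ, 0 < ε ∧ x + ε • d ∈ C}

theorem tangCone_eq_closure_feasibleDirections (x : E) (C : Set E) :
    TangCone x C = closure (FeasibleDirections x C) := rfl

theorem tangCone_mono (x : E) {C D : Set E} (h : C ⊆ D) : TangCone x C ⊆ TangCone x D :=
  closure_mono fun _ ⟨ε, hε, hd⟩ => ⟨ε, hε, h hd⟩

theorem tangCone_subset_span [FiniteDimensional ℝ E] {x : E} {C : Set E} (hx : x ∈ C) :
    TangCone x C ⊆ Submodule.span ℝ C := by
  refine closure_minimal (fun d ⟨ε, hε, hd⟩ => ?_)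
    (Submodule.span ℝ C).closed_of_finiteDimensional
  have hdiff : d = ε⁻¹ • ((x + ε • d) - x) := by
    rw [add_sub_cancel_left, smul_smul, inv_mul_cancel₀ hε.ne', one_smul]
  rw [hdiff]
  exact Submodule.smul_mem _ _ (Submodule.sub_mem _ (Submodule.subset_span hd)
    (Submodule.subset_span hx))

theorem IsConeSet.mem_feasibleDirections_iff {C : Set E} (hC : IsConeSet C) {x d : E} :
    d ∈ FeasibleDirections x C ↔ ∃ y ∈ C, ∃ t : ℝ, 0 < t ∧ d = y - t • x := by
  constructor
  · rintro ⟨ε, hε, h⟩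
    refine ⟨ε⁻¹ • (x + ε • d), hC _ (inv_pos.2 hε) _ h, ε⁻¹, inv_pos.2 hε, ?_⟩
    rw [smul_add, smul_smul, inv_mul_cancel₀ hε.ne', one_smul, add_sub_cancel_left]
  · rintro ⟨y, hy, t, ht, rfl⟩
    refine ⟨t⁻¹, inv_pos.2 ht, ?_⟩
    rw [smul_sub, smul_smul, inv_mul_cancel₀ ht.ne', one_smul, add_sub_cancel]
    exact hC _ (inv_pos.2 ht) _ hy

theorem IsConeSet.convex_feasibleDirections {C : Set E} (hconv : Convex ℝ C) (hC : IsConeSet C)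
    (x : E) : Convex ℝ (FeasibleDirections x C) := by
  intro d₁ hd₁ d₂ hd₂ a b ha hb hab
  obtain ⟨y₁, hy₁, t₁, ht₁, rfl⟩ := hC.mem_feasibleDirections_iff.1 hd₁
  obtain ⟨y₂, hy₂, t₂, ht₂, rfl⟩ := hC.mem_feasibleDirections_iff.1 hd₂
  refine hC.mem_feasibleDirections_iff.2 ⟨a • y₁ + b • y₂, hconv hy₁ hy₂ ha hb hab,
    a * t₁ + b * t₂, convex_Ioi (0 : ℝ) ht₁ ht₂ ha hb hab, ?_⟩
  rw [smul_sub, smul_sub, smul_smul, smul_smul, add_smul]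
  abel

theorem IsConeSet.feasibleDirections {C : Set E} (hC : IsConeSet C) (x : E) :
    IsConeSet (FeasibleDirections x C) := by
  intro c hc d hd
  obtain ⟨y, hy, t, ht, rfl⟩ := hC.mem_feasibleDirections_iff.1 hd
  exact hC.mem_feasibleDirections_iff.2
    ⟨c • y, hC c hc y hy, c * t, mul_pos hc ht, by rw [smul_sub, smul_smul]⟩

theorem IsConeSet.mem_dualCone'_tangCone_iff {C : Set E} (hC : IsConeSet C) {x s : E}
    (hx : x ∈ C) : s ∈ DualCone' (TangCone x C) ↔ s ∈ DualCone' C ∧ ⟪s, x⟫ = 0 := by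
  have hinner : ∀ y : E, ∀ t : ℝ, ⟪s, y - t • x⟫ = ⟪s, y⟫ - t * ⟪s, x⟫ := fun y t => by
    rw [inner_sub_right, real_inner_smul_right]
  rw [tangCone_eq_closure_feasibleDirections, dualCone'_closure]
  constructor
  · intro h
    have hdir : ∀ y ∈ C, ∀ t : ℝ, 0 < t → 0 ≤ ⟪s, y⟫ - t * ⟪s, x⟫ := fun y hy t ht =>
      hinner y t ▸ h _ (hC.mem_feasibleDirections_iff.2 ⟨y, hy, t, ht, rfl⟩)
    have hx0 : ⟪s, x⟫ = 0 := by
      have h₂ := hdir x hx 2 two_pos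
      have h₁₂ := hdir x hx (1 / 2) one_half_pos
      linarith
    refine ⟨fun y hy => ?_, hx0⟩
    simpa [hx0] using hdir y hy 1 one_pos
  · rintro ⟨hs, hx0⟩ d hd
    obtain ⟨y, hy, t, ht, rfl⟩ := hC.mem_feasibleDirections_iff.1 hd
    rw [hinner, hx0, mul_zero, sub_zero]
    exact hs y hy

theorem IsConeSet.mem_tangCone_iff [CompleteSpace E] {C : Set E} (hconv : Convex ℝ C)
    (hC : IsConeSet C) {x d : E} (hx : x ∈ C) :
    d ∈ TangCone x C ↔ ∀ s ∈ DualCone' C, ⟪s, x⟫ = 0 → 0 ≤ ⟪s, d⟫ := by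
  have hzero : (0 : E) ∈ FeasibleDirections x C := ⟨1, one_pos, by simpa using hx⟩
  have hbipolar : TangCone x C = DualCone' (DualCone' (TangCone x C)) := by
    rw [tangCone_eq_closure_feasibleDirections, dualCone'_closure,
      dualCone'_dualCone' ⟨0, hzero⟩ (hC.convex_feasibleDirections hconv x)
        (hC.feasibleDirections x)]
  rw [hbipolar]
  refine ⟨fun h s hs hsx => ?_, fun h s hs => ?_⟩
  · rw [real_inner_comm]
    exact h s ((hC.mem_dualCone'_tangCone_iff hx).2 ⟨hs, hsx⟩)
  · obtain ⟨hsC, hsx⟩ := (hC.mem_dualCone'_tangCone_iff hx).1 hs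
    rw [real_inner_comm]
    exact h s hsC hsx

theorem IsFaceOf.zero_mem {F K : Set E} (hF : IsFaceOf F K) (hFne : F.Nonempty)
    (hKclosed : IsClosed K) (hKconv : Convex ℝ K) (hKcone : IsConeSet K) : (0 : E) ∈ F := by
  obtain ⟨a, ha⟩ := hFne
  have h0K : (0 : E) ∈ K := hKcone.zero_mem ⟨a, hF.1 ha⟩ hKclosed hKconv
  have hseg : a ∈ openSegment ℝ (0 : E) ((2 : ℝ) • a) :=
    ⟨1 / 2, 1 / 2, one_half_pos, one_half_pos, add_halves 1, by module⟩
  exact (hF.2.2.2 a ha 0 h0K _ (hKcone 2 two_pos a (hF.1 ha)) hseg).1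

theorem IsFaceOf.isConeSet {F K : Set E} (hF : IsFaceOf F K) (hKcone : IsConeSet K)
    (h0F : (0 : E) ∈ F) : IsConeSet F := by
  obtain ⟨hFK, hFconv, -, hface⟩ := hF
  intro c hc y hy
  rcases le_or_gt c 1 with hc1 | hc1
  · simpa using hFconv hy h0F hc.le (sub_nonneg.2 hc1) (add_sub_cancel c 1)
  · have hseg : y ∈ openSegment ℝ (0 : E) (c • y) :=
      ⟨1 - c⁻¹, c⁻¹, sub_pos.2 (inv_lt_one_of_one_lt₀ hc1), inv_pos.2 hc, sub_add_cancel 1 _,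
        by rw [smul_zero, zero_add, smul_smul, inv_mul_cancel₀ hc.ne', one_smul]⟩
    exact (hface y hy 0 (hFK h0F) (c • y) (hKcone c hc y (hFK hy)) hseg).2

theorem IsConeSet.span_subset_sub {F : Set E} (hconv : Convex ℝ F) (hcone : IsConeSet F)
    (h0 : (0 : E) ∈ F) : (Submodule.span ℝ F : Set E) ⊆ F - F := by
  intro y hy
  induction hy using Submodule.span_induction with
  | mem z hz => exact ⟨z, hz, 0, h0, sub_zero z⟩
  | zero => exact ⟨0, h0, 0, h0, sub_zero 0⟩
  | add z w _ _ ihz ihw =>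
    obtain ⟨a, ha, b, hb, rfl⟩ := ihz
    obtain ⟨c, hc, d, hd, rfl⟩ := ihw
    exact ⟨a + c, hcone.add_mem hconv ha hc, b + d, hcone.add_mem hconv hb hd,
      add_sub_add_comm a c b d⟩
  | smul r z _ ih =>
    obtain ⟨a, ha, b, hb, rfl⟩ := ih
    rcases lt_trichotomy r 0 with hr | rfl | hr
    · exact ⟨(-r) • b, hcone _ (neg_pos.2 hr) _ hb, (-r) • a, hcone _ (neg_pos.2 hr) _ ha,
        by module⟩
    · exact ⟨0, h0, 0, h0, by simp⟩
    · exact ⟨r • a, hcone r hr a ha, r • b, hcone r hr b hb, (smul_sub r a b).symm⟩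

theorem IsFaceOf.inter_span_eq {F K : Set E} (hF : IsFaceOf F K) (hFcone : IsConeSet F)
    (h0F : (0 : E) ∈ F) : K ∩ Submodule.span ℝ F = F := by
  obtain ⟨hFK, hFconv, -, hface⟩ := hF
  refine Subset.antisymm ?_ fun y hy => ⟨hFK hy, Submodule.subset_span hy⟩
  rintro y ⟨hyK, hy⟩
  obtain ⟨a, ha, b, hb, rfl⟩ := hFcone.span_subset_sub hFconv h0F hy
  have hseg : a ∈ openSegment ℝ (a - b) (a + b) :=
    ⟨1 / 2, 1 / 2, one_half_pos, one_half_pos, add_halves 1, by module⟩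
  exact (hface a ha (a - b) hyK (a + b) (hFK (hFcone.add_mem hFconv ha hb)) hseg).1

theorem IsFDC.dualCone'_eq_add_perpOf [CompleteSpace E] {K F : Set E} (hFDC : IsFDC K)
    (hKclosed : IsClosed K) (hKconv : Convex ℝ K) (hKcone : IsConeSet K)
    [(Submodule.span ℝ F).HasOrthogonalProjection] (hF : IsProperFaceOf F K) :
    DualCone' F = DualCone' K + PerpOf F := by
  have hFface : IsFaceOf F K := hF.1
  have h0F : (0 : E) ∈ F := hFface.zero_mem hF.2.1 hKclosed hKconv hKcone
  have h0dual : (0 : E) ∈ DualCone' K := fun y _ => (inner_zero_left y).ge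
  have h0perp : (0 : E) ∈ PerpOf F := fun y _ => inner_zero_left y
  have hperp : PerpOf F = ((Submodule.span ℝ F)ᗮ : Set E) := perpOf_eq_orthogonal F
  have h0sum : (0 : E) ∈ DualCone' K + PerpOf F := by simpa using add_mem_add h0dual h0perp
  have hdual : DualCone' (DualCone' K + PerpOf F) = F := by
    rw [dualCone'_add h0dual h0perp, dualCone'_dualCone' (hF.2.1.mono hFface.1) hKconv hKcone,
      hKclosed.closure_eq, dualCone'_perpOf,
      hFface.inter_span_eq (hFface.isConeSet hKcone h0F) h0F]
  calc DualCone' F = DualCone' (DualCone' (DualCone' K + PerpOf F)) := by rw [hdual]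
    _ = DualCone' K + PerpOf F := by
      rw [dualCone'_dualCone' ⟨0, h0sum⟩
        ((convex_dualCone' K).add (hperp ▸ Submodule.convex _))
        ((isConeSet_dualCone' K).add (hperp ▸ Submodule.isConeSet _)), (hFDC F hF).closure_eq]

/-- **Theorem (necessary condition).** If a closed convex cone `K` in a finite-dimensional
Euclidean space is facially dual complete, then for every proper face `F` of `K` and every
`x ∈ F`, `T(x;K) ∩ span F = T(x;F)`. -/
theorem FDC_implies_tangentially_exposed
    {E : Type*} [NormedAddCommGroup E] [InnerProductSpace ℝ E] [FiniteDimensional ℝ E]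
    (K : Set E) (hKclosed : IsClosed K) (hKconv : Convex ℝ K) (hKcone : IsConeSet K)
    (hFDC : IsFDC K) :
    ∀ F : Set E, IsProperFaceOf F K → ∀ x ∈ F,
      TangCone x K ∩ (Submodule.span ℝ F : Set E) = TangCone x F := by
  intro F hF x hx
  have hFK : F ⊆ K := hF.1.1
  have hFcone : IsConeSet F :=
    hF.1.isConeSet hKcone (hF.1.zero_mem hF.2.1 hKclosed hKconv hKcone)
  refine Subset.antisymm ?_ (subset_inter (tangCone_mono x hFK) (tangCone_subset_span hx))
  rintro d ⟨hdK, hdF⟩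
  rw [hKcone.mem_tangCone_iff hKconv (hFK hx)] at hdK
  rw [hFcone.mem_tangCone_iff hF.1.2.1 hx]
  intro s hs hsx
  rw [hFDC.dualCone'_eq_add_perpOf hKclosed hKconv hKcone hF] at hs
  obtain ⟨u, hu, v, hv, rfl⟩ := hs
  have hv' : v ∈ ((Submodule.span ℝ F)ᗮ : Set E) := perpOf_eq_orthogonal F ▸ hv
  have hvd : ⟪v, d⟫ = 0 := ((Submodule.span ℝ F).mem_orthogonal' v).1 hv' d hdF
  rw [inner_add_left, hv x hx, add_zero] at hsx
  rw [inner_add_left, hvd, add_zero]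
  exact hdK u hu hsx
end

section
/- Let C be a closed convex set in a finite-dimensional Euclidean space and let S be a nonempty subset of C. Then the relative interior of conv(S) and the relative interior of face(S;C), the minimal face of C containing S, have a point in common: relint(conv S) ∩ relint(face(S;C)) ≠ ∅. -/
/- Common definitions following "Facially Dual Complete (Nice) cones and
lexicographic tangents" by V. Roshchina and L. Tunçel. -/

open Set Filter
open scoped Pointwise

local notation "⟪" x ", " y "⟫" => @inner ℝ _ _ x y

variable {E : Type*} [NormedAddCommGroup E] [InnerProductSpace ℝ E]

/- Take `x` in the relative interior of `conv S` and let `F` be the set of `y ∈ C` such that the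
segment from `y` through `x` extends beyond `x` inside `C`. `F` is convex and extreme in `C`, and
every segment of `F` ending at `x` extends beyond `x` inside `F`; in finite dimension this makes `x`
a relative interior point of `F`. Hence `F = C ∩ aff F` is closed, so `F` is a face of `C`. It
contains `S` because `x ∈ relint (conv S)`, and every face containing `x` contains `F`, so `F` is
the minimal face of `C` containing `S`. -/

open Topology

section PointFace

variable {V : Type*} [AddCommGroup V] [Module ℝ V] {C : Set V} {x y p u v : V}

-- For convex `C`, the minimal face of `C` containing `x`.
def pointFace (C : Set V) (x : V) : Set V := {y ∈ C | ∃ ε : ℝ, 0 < ε ∧ x + ε • (x - y) ∈ C}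

theorem pointFace_subset : pointFace C x ⊆ C := fun _ hy => hy.1

theorem self_mem_pointFace (hx : x ∈ C) : x ∈ pointFace C x :=
  ⟨hx, 1, one_pos, by simpa using hx⟩

theorem Convex.add_smul_mem_of_le (hC : Convex ℝ C) (hx : x ∈ C) {t s : ℝ} (h : x + t • v ∈ C)
    (ht : 0 < t) (hs : 0 ≤ s) (hst : s ≤ t) : x + s • v ∈ C := by
  have := hC.add_smul_mem hx h ⟨div_nonneg hs ht.le, (div_le_one ht).2 hst⟩
  rwa [smul_smul, div_mul_cancel₀ _ ht.ne'] at this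

theorem convex_pointFace (hC : Convex ℝ C) (hx : x ∈ C) : Convex ℝ (pointFace C x) := by
  rintro y₁ ⟨hy₁, ε₁, hε₁, h₁⟩ y₂ ⟨hy₂, ε₂, hε₂, h₂⟩ a b ha hb hab
  refine ⟨hC hy₁ hy₂ ha hb hab, min ε₁ ε₂, lt_min hε₁ hε₂, ?_⟩
  have k₁ := hC.add_smul_mem_of_le hx h₁ hε₁ (lt_min hε₁ hε₂).le (min_le_left _ _)
  have k₂ := hC.add_smul_mem_of_le hx h₂ hε₂ (lt_min hε₁ hε₂).le (min_le_right _ _)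
  convert hC k₁ k₂ ha hb hab using 1
  obtain rfl : b = 1 - a := by linarith
  module

theorem mem_pointFace_of_mem_openSegment (hu : u ∈ C) (hv : v ∈ C)
    (hp : p ∈ openSegment ℝ u v) : u ∈ pointFace C p := by
  obtain ⟨a, b, ha, hb, hab, rfl⟩ := hp
  refine ⟨hu, a / b, div_pos ha hb, ?_⟩
  convert hv using 1
  obtain rfl : a = 1 - b := by linarith
  match_scalars <;> field_simp
  all_goals ring

theorem pointFace_subset_pointFace (hC : Convex ℝ C) (hp : p ∈ pointFace C x) :
    pointFace C p ⊆ pointFace C x := by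
  obtain ⟨-, ε, hε, hpε⟩ := hp
  rintro y ⟨hy, δ, hδ, hyδ⟩
  refine ⟨hy, ε * δ / (1 + δ + ε), by positivity, ?_⟩
  -- with `η = ε * δ / (1 + δ + ε)`, the point `x + η • (x - y)` lies on the segment joining
  -- `x + ε • (x - p)` and `p + δ • (p - y)`
  convert hC hpε hyδ (a := (1 + δ) / (1 + δ + ε)) (b := ε / (1 + δ + ε)) (by positivity)
    (by positivity) (by field_simp) using 1
  match_scalars <;> field_simp
  all_goals ring

theorem isExtreme_pointFace (hC : Convex ℝ C) : IsExtreme ℝ C (pointFace C x) :=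
  ⟨pointFace_subset, fun _ hu _ hv _ hp h =>
    pointFace_subset_pointFace hC hp (mem_pointFace_of_mem_openSegment hu hv h)⟩

theorem mem_openSegment_add_smul_sub {ε : ℝ} (hε : 0 < ε) :
    x ∈ openSegment ℝ y (x + ε • (x - y)) := by
  refine ⟨ε / (1 + ε), 1 / (1 + ε), by positivity, by positivity, by field_simp; ring, ?_⟩
  match_scalars <;> field_simp
  all_goals ring

theorem exists_add_smul_sub_mem_pointFace (hy : y ∈ pointFace C x) :
    ∃ ε : ℝ, 0 < ε ∧ x + ε • (x - y) ∈ pointFace C x := by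
  obtain ⟨hyC, ε, hε, hw⟩ := hy
  refine ⟨ε, hε, hw, ε⁻¹, inv_pos.2 hε, ?_⟩
  convert hyC using 1
  match_scalars <;> field_simp
  all_goals ring

end PointFace

section IntrinsicInterior

variable {V : Type*} [AddCommGroup V] [Module ℝ V] {A : Set V} {x y : V}

theorem AffineSubspace.add_smul_sub_mem {Q : AffineSubspace ℝ V} {z : V} (hx : x ∈ Q)
    (hy : y ∈ Q) (hz : z ∈ Q) (t : ℝ) : x + t • (y - z) ∈ Q := by
  simpa [add_comm] using
    Q.vadd_mem_of_mem_direction (Q.direction.smul_mem t (Q.vsub_mem_direction hy hz)) hx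

variable [TopologicalSpace V]

theorem mem_intrinsicInterior_iff_mem_nhdsWithin :
    x ∈ intrinsicInterior ℝ A ↔ x ∈ A ∧ A ∈ 𝓝[(affineSpan ℝ A : Set V)] x := by
  constructor
  · rintro ⟨x, hx, rfl⟩
    exact ⟨interior_subset (s := ((↑) ⁻¹' A : Set (affineSpan ℝ A))) hx,
      preimage_coe_mem_nhds_subtype.1 (mem_interior_iff_mem_nhds.1 hx)⟩
  · rintro ⟨hxA, hA⟩
    exact ⟨⟨x, subset_affineSpan ℝ A hxA⟩,
      mem_interior_iff_mem_nhds.2 (preimage_coe_mem_nhds_subtype.2 hA), rfl⟩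

variable [IsTopologicalAddGroup V] [ContinuousSMul ℝ V]

theorem exists_add_smul_sub_mem_of_mem_intrinsicInterior (hx : x ∈ intrinsicInterior ℝ A)
    (hy : y ∈ affineSpan ℝ A) : ∃ ε : ℝ, 0 < ε ∧ x + ε • (x - y) ∈ A := by
  obtain ⟨hxA, hA⟩ := mem_intrinsicInterior_iff_mem_nhdsWithin.1 hx
  have hxQ := subset_affineSpan ℝ A hxA
  have hline : Tendsto (fun t : ℝ => x + t • (x - y)) (𝓝[>] 0)
      (𝓝[(affineSpan ℝ A : Set V)] x) := by
    refine tendsto_nhdsWithin_iff.2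
      ⟨?_, .of_forall fun t => AffineSubspace.add_smul_sub_mem hxQ hxQ hy t⟩
    have : Continuous fun t : ℝ => x + t • (x - y) := by fun_prop
    simpa using this.continuousWithinAt.tendsto (x := 0) (s := Ioi 0)
  obtain ⟨ε, hεA, hε⟩ := ((hline.eventually hA).and self_mem_nhdsWithin).exists
  exact ⟨ε, hε, hεA⟩

theorem subset_pointFace_of_mem_intrinsicInterior_convexHull {C S : Set V} (hC : Convex ℝ C)
    (hSC : S ⊆ C) (hx : x ∈ intrinsicInterior ℝ (convexHull ℝ S)) : S ⊆ pointFace C x := by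
  intro s hs
  obtain ⟨ε, hε, hw⟩ := exists_add_smul_sub_mem_of_mem_intrinsicInterior hx
    (subset_affineSpan ℝ _ (subset_convexHull ℝ S hs))
  exact ⟨hSC hs, ε, hε, convexHull_min hSC hC hw⟩

theorem Convex.openSegment_intrinsicInterior_self_subset_intrinsicInterior (hA : Convex ℝ A)
    (hx : x ∈ intrinsicInterior ℝ A) (hy : y ∈ A) :
    openSegment ℝ x y ⊆ intrinsicInterior ℝ A := by
  rintro p ⟨a, b, ha, hb, hab, rfl⟩
  obtain ⟨hxA, hA'⟩ := mem_intrinsicInterior_iff_mem_nhdsWithin.1 hx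
  have hpA : a • x + b • y ∈ A := hA hxA hy ha.le hb.le hab
  -- `q ↦ x + a⁻¹ • (q - p)` undoes the homothety of ratio `a` centred at `y`
  set f : V → V := fun q => x + a⁻¹ • (q - (a • x + b • y))
  have hf : Tendsto f (𝓝[(affineSpan ℝ A : Set V)] (a • x + b • y))
      (𝓝[(affineSpan ℝ A : Set V)] x) := by
    refine tendsto_nhdsWithin_iff.2 ⟨?_, eventually_mem_nhdsWithin.mono fun q hq =>
      AffineSubspace.add_smul_sub_mem (subset_affineSpan ℝ A hxA) hq
        (subset_affineSpan ℝ A hpA) _⟩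
    have : Continuous f := by fun_prop
    simpa [f] using this.continuousWithinAt.tendsto (x := a • x + b • y)
  refine mem_intrinsicInterior_iff_mem_nhdsWithin.2 ⟨hpA, ?_⟩
  filter_upwards [hf hA'] with q hq
  convert hA hq hy ha.le hb.le hab using 1
  simp only [f, smul_add, smul_smul, mul_inv_cancel₀ ha.ne', one_smul]
  abel

end IntrinsicInterior

section FiniteDimensional

variable {V : Type*} [NormedAddCommGroup V] [NormedSpace ℝ V] [FiniteDimensional ℝ V]
  {C : Set V} {x : V}

theorem mem_intrinsicInterior_of_forall_exists_add_smul_sub_mem (hC : Convex ℝ C) (hx : x ∈ C)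
    (h : ∀ y ∈ C, ∃ ε : ℝ, 0 < ε ∧ x + ε • (x - y) ∈ C) : x ∈ intrinsicInterior ℝ C := by
  obtain ⟨z, hz⟩ := Set.Nonempty.intrinsicInterior hC ⟨x, hx⟩
  obtain ⟨ε, hε, hw⟩ := h z (intrinsicInterior_subset hz)
  exact hC.openSegment_intrinsicInterior_self_subset_intrinsicInterior hz hw
    (mem_openSegment_add_smul_sub hε)

theorem self_mem_intrinsicInterior_pointFace (hC : Convex ℝ C) (hx : x ∈ C) :
    x ∈ intrinsicInterior ℝ (pointFace C x) :=
  mem_intrinsicInterior_of_forall_exists_add_smul_sub_mem (convex_pointFace hC hx)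
    (self_mem_pointFace hx) fun _ => exists_add_smul_sub_mem_pointFace

theorem isClosed_pointFace (hCclosed : IsClosed C) (hC : Convex ℝ C) (hx : x ∈ C) :
    IsClosed (pointFace C x) := by
  have hrelint := self_mem_intrinsicInterior_pointFace hC hx
  have : pointFace C x = C ∩ affineSpan ℝ (pointFace C x) := by
    refine Subset.antisymm (fun y hy => ⟨hy.1, subset_affineSpan ℝ _ hy⟩) ?_
    rintro y ⟨hy, hyspan⟩
    obtain ⟨ε, hε, hw⟩ := exists_add_smul_sub_mem_of_mem_intrinsicInterior hrelint hyspan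
    exact ⟨hy, ε, hε, pointFace_subset hw⟩
  rw [this]
  exact hCclosed.inter (AffineSubspace.closed_of_finiteDimensional _)

end FiniteDimensional

section Face

variable {C S F : Set E} {x : E}

theorem pointFace_subset_of_isFaceOf (hF : IsFaceOf F C) (hxF : x ∈ F) : pointFace C x ⊆ F :=
  fun y ⟨hy, _, hε, hw⟩ => (hF.2.2.2 x hxF y hy _ hw (mem_openSegment_add_smul_sub hε)).1

variable [FiniteDimensional ℝ E]

theorem isFaceOf_pointFace (hCclosed : IsClosed C) (hC : Convex ℝ C) (hx : x ∈ C) :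
    IsFaceOf (pointFace C x) C :=
  ⟨pointFace_subset, convex_pointFace hC hx, isClosed_pointFace hCclosed hC hx,
    fun _ hp _ hu _ hv h => ⟨(isExtreme_pointFace hC).left_mem_of_mem_openSegment hu hv hp h,
      (isExtreme_pointFace hC).right_mem_of_mem_openSegment hu hv hp h⟩⟩

theorem minimalFace_eq_pointFace (hCclosed : IsClosed C) (hC : Convex ℝ C) (hSC : S ⊆ C)
    (hx : x ∈ intrinsicInterior ℝ (convexHull ℝ S)) : MinimalFace S C = pointFace C x := by
  have hxC : x ∈ C := convexHull_min hSC hC (intrinsicInterior_subset hx)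
  refine Subset.antisymm (sInter_subset_of_mem ⟨isFaceOf_pointFace hCclosed hC hxC,
    subset_pointFace_of_mem_intrinsicInterior_convexHull hC hSC hx⟩) ?_
  exact subset_sInter fun F ⟨hF, hSF⟩ =>
    pointFace_subset_of_isFaceOf hF (convexHull_min hSF hF.2.1 (intrinsicInterior_subset hx))

end Face

/-- **Proposition.** For a closed convex set `C` and a nonempty `S ⊆ C`, the relative
interiors of `conv S` and of the minimal face of `C` containing `S` intersect. -/
theorem relint_convexHull_meets_relint_minimalFace
    {E : Type*} [NormedAddCommGroup E] [InnerProductSpace ℝ E] [FiniteDimensional ℝ E]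
    (C S : Set E) (hCclosed : IsClosed C) (hCconv : Convex ℝ C)
    (hS : S.Nonempty) (hSC : S ⊆ C) :
    (intrinsicInterior ℝ (convexHull ℝ S) ∩ intrinsicInterior ℝ (MinimalFace S C)).Nonempty := by
  obtain ⟨x, hx⟩ := hS.convexHull.intrinsicInterior (convex_convexHull ℝ S)
  refine ⟨x, hx, ?_⟩
  rw [minimalFace_eq_pointFace hCclosed hCconv hSC hx]
  exact self_mem_intrinsicInterior_pointFace hCconv
    (convexHull_min hSC hCconv (intrinsicInterior_subset hx))
end

section
/- Let K be a regular cone (pointed, closed, convex, with nonempty interior) in a finite-dimensional Euclidean space E, let F be an exposed proper face of K, and let L = span(F). Then for every u ∈ F|_L^* such that u exposes {0} as a face of F (i.e., ⟨u,x⟩ > 0 for all x ∈ F \ {0}), there exists g ∈ K* whose projection onto E*/L^⊥ equals u. -/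
/- Common definitions following "Facially Dual Complete (Nice) cones and
lexicographic tangents" by V. Roshchina and L. Tunçel. -/

open Set Filter
open scoped Pointwise

local notation "⟪" x ", " y "⟫" => @inner ℝ _ _ x y

variable {E : Type*} [NormedAddCommGroup E] [InnerProductSpace ℝ E]

/- Let `s ∈ K*` expose `F`. On the compact set `K ∩ S` (`S` the unit sphere), `⟪s, ·⟫ ≥ 0`
vanishes only on `F ∖ {0}`, where `⟪u, ·⟫ > 0`; by compactness `u + t • s` is nonnegative on
`K ∩ S` for large `t`, hence on the cone `K`. Since `s ⊥ span F`, adding `t • s` does not change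
the projection onto `span F`. -/

theorem IsCompact.exists_forall_nonneg_add_mul {X : Type*} [TopologicalSpace X] {A : Set X}
    (hA : IsCompact A) {f g : X → ℝ} (hf : Continuous f) (hg : Continuous g)
    (hg_nonneg : ∀ x ∈ A, 0 ≤ g x) (hf_pos : ∀ x ∈ A, g x = 0 → 0 < f x) :
    ∃ t : ℝ, ∀ x ∈ A, 0 ≤ f x + t * g x := by
  set B := A ∩ {x | f x ≤ 0}
  have hB : IsCompact B := hA.inter_right (isClosed_le hf continuous_const)
  have hg_pos : ∀ x ∈ B, 0 < g x := fun x hx =>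
    (hg_nonneg x hx.1).lt_of_ne' fun h => (hf_pos x hx.1 h).not_ge hx.2
  obtain ⟨T, hT⟩ := hB.bddAbove_image (f := fun x => -f x / g x)
    (hf.neg.continuousOn.div hg.continuousOn fun x hx => (hg_pos x hx).ne')
  refine ⟨max T 0, fun x hx => ?_⟩
  by_cases hfx : f x ≤ 0
  · have hxB : x ∈ B := ⟨hx, hfx⟩
    have hT_x : -f x / g x ≤ max T 0 := (hT ⟨x, hxB, rfl⟩).trans (le_max_left _ _)
    rw [div_le_iff₀ (hg_pos x hxB)] at hT_x
    linarith
  · have := mul_nonneg (le_max_right T 0) (hg_nonneg x hx)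
    linarith

theorem IsConeSet.mem_dualCone'_of_forall_sphere {E : Type*} [NormedAddCommGroup E]
    [InnerProductSpace ℝ E] {K : Set E} (hK : IsConeSet K) {g : E}
    (hg : ∀ x ∈ K ∩ Metric.sphere 0 1, 0 ≤ ⟪g, x⟫) : g ∈ DualCone' K := by
  intro x hx
  rcases eq_or_ne x 0 with rfl | hx0
  · simp
  have hnorm : 0 < ‖x‖ := norm_pos_iff.mpr hx0
  have hunit : ‖x‖⁻¹ • x ∈ K ∩ Metric.sphere 0 1 :=
    ⟨hK _ (inv_pos.mpr hnorm) x hx, by simp [norm_smul, hnorm.ne']⟩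
  have := hg _ hunit
  rw [real_inner_smul_right] at this
  exact nonneg_of_mul_nonneg_right (by linarith) (inv_pos.mpr hnorm)

theorem mem_orthogonal_span_of_forall_inner_eq_zero {E : Type*} [NormedAddCommGroup E]
    [InnerProductSpace ℝ E] {F : Set E} {s : E} (hs : ∀ x ∈ F, ⟪s, x⟫ = 0) :
    s ∈ (Submodule.span ℝ F)ᗮ := by
  have hspan : Submodule.span ℝ F ≤ (ℝ ∙ s)ᗮ := Submodule.span_le.mpr fun x hx =>
    Submodule.mem_orthogonal_singleton_iff_inner_right.mpr (hs x hx)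
  exact Submodule.orthogonal_le hspan
    (Submodule.le_orthogonal_orthogonal _ (Submodule.mem_span_singleton_self s))

theorem expose_pointed_general
    {E : Type*} [NormedAddCommGroup E] [InnerProductSpace ℝ E] [FiniteDimensional ℝ E]
    (K : Set E) (hKclosed : IsClosed K) (hKcone : IsConeSet K)
    (F : Set E)
    (hFexp : ∃ s ∈ DualCone' K, F = K ∩ {x : E | ⟪s, x⟫ = 0})
    (u : E) (huL : u ∈ Submodule.span ℝ F)
    (hu0 : ∀ x ∈ F, x ≠ 0 → 0 < ⟪u, x⟫) :
    ∃ g ∈ DualCone' K,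
      ((Submodule.orthogonalProjectionOnto (Submodule.span ℝ F) g : Submodule.span ℝ F) : E) = u := by
  obtain ⟨s, hsK, rfl⟩ := hFexp
  obtain ⟨t, ht⟩ := ((isCompact_sphere (0 : E) 1).inter_left hKclosed).exists_forall_nonneg_add_mul
    (continuous_const.inner continuous_id) (continuous_const.inner continuous_id)
    (fun x hx => hsK x hx.1)
    (fun x hx hsx => hu0 x ⟨hx.1, hsx⟩ (ne_zero_of_mem_unit_sphere ⟨x, hx.2⟩))
  have hs_perp : s ∈ (Submodule.span ℝ (K ∩ {x : E | ⟪s, x⟫ = 0}))ᗮ :=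
    mem_orthogonal_span_of_forall_inner_eq_zero fun x hx => hx.2
  refine ⟨u + t • s, hKcone.mem_dualCone'_of_forall_sphere fun x hx => ?_, ?_⟩
  · simpa [inner_add_left, real_inner_smul_left] using ht x hx
  · exact Submodule.eq_starProjection_of_mem_orthogonal' huL
      (Submodule.smul_mem _ t hs_perp) rfl

/-- **Proposition.** Let `K` be a regular cone (pointed, closed, convex, nonempty interior),
`F` an exposed proper face of `K`, `L = span F`. For every `u ∈ F|_L^*` that exposes `{0}`
as a face of `F` (i.e. `⟨u,x⟩ > 0` for all `x ∈ F \ {0}`), there exists `g ∈ K*` whose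
orthogonal projection onto `L` is `u`. -/
theorem expose_pointed
    {E : Type*} [NormedAddCommGroup E] [InnerProductSpace ℝ E] [FiniteDimensional ℝ E]
    (K : Set E) (hKclosed : IsClosed K) (hKconv : Convex ℝ K) (hKcone : IsConeSet K)
    (hKpointed : K ∩ (-K) ⊆ {0}) (hKint : (interior K).Nonempty)
    (F : Set E) (hF : IsProperFaceOf F K)
    (hFexp : ∃ s ∈ DualCone' K, F = K ∩ {x : E | ⟪s, x⟫ = 0})
    (u : E) (huL : u ∈ Submodule.span ℝ F)
    (huF : ∀ x ∈ F, 0 ≤ ⟪u, x⟫)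
    (hu0 : ∀ x ∈ F, x ≠ 0 → 0 < ⟪u, x⟫) :
    ∃ g ∈ DualCone' K,
      ((Submodule.orthogonalProjectionOnto (Submodule.span ℝ F) g : Submodule.span ℝ F) : E) = u :=
  expose_pointed_general K hKclosed hKcone F hFexp u huL hu0
end

section
/- If a closed convex set C ⊂ ℝⁿ is facially exposed (every proper face of C is exposed), then all zero- and one-dimensional faces of C are tangentially exposed; that is, for every face F of C with dim F < 2 and every x ∈ F, span(F − x) ∩ T(x;C) = T(x;F). -/
/- Common definitions following "Facially Dual Complete (Nice) cones and
lexicographic tangents" by V. Roshchina and L. Tunçel. -/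

open Set Filter
open scoped Pointwise

local notation "⟪" x ", " y "⟫" => @inner ℝ _ _ x y

variable {E : Type*} [NormedAddCommGroup E] [InnerProductSpace ℝ E]

set_option maxHeartbeats 1000000 in
/-- **Proposition.** If a closed convex set `C ⊂ ℝⁿ` is facially exposed, then all zero- and
one-dimensional faces of `C` are tangentially exposed: for every face `F` with `dim F < 2`
and every `x ∈ F`, `span(F − x) ∩ T(x;C) = T(x;F)`. -/
theorem low_dim_faces_tangentially_exposed (n : ℕ) (C : Set (EuclideanSpace ℝ (Fin n)))
    (hCclosed : IsClosed C) (hCconv : Convex ℝ C) (hfe : FaciallyExposed C) :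
    ∀ F : Set (EuclideanSpace ℝ (Fin n)), IsFaceOf F C →
      Module.finrank ℝ ↥(vectorSpan ℝ F) < 2 →
      ∀ x ∈ F,
        (Submodule.span ℝ ((fun y => y - x) '' F) : Set (EuclideanSpace ℝ (Fin n))) ∩
            TangCone x C = TangCone x F := by
  intro F hF hdim x hxF
  obtain ⟨hFC, hFconv, hFclosed, hFext⟩ := hF
  set W : Submodule ℝ (EuclideanSpace ℝ (Fin n)) :=
    Submodule.span ℝ ((fun y => y - x) '' F) with hWdef
  have hWle : W ≤ vectorSpan ℝ F := by
    rw [vectorSpan_def]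
    apply Submodule.span_le.mpr
    rintro _ ⟨y, hy, rfl⟩
    exact Submodule.subset_span (Set.vsub_mem_vsub hy hxF)
  have hWrank : Module.finrank ℝ W ≤ 1 := by
    have := Submodule.finrank_mono hWle
    omega
  apply Set.Subset.antisymm
  · rintro d ⟨hdW, hdT⟩
    by_cases hex : ∃ y0 ∈ F, y0 ≠ x
    · obtain ⟨y0, hy0F, hy0ne⟩ := hex
      set v : EuclideanSpace ℝ (Fin n) := y0 - x with hv
      have hvne : v ≠ 0 := sub_ne_zero.mpr hy0ne
      have hvW : v ∈ W := Submodule.subset_span ⟨y0, hy0F, rfl⟩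
      have hspan : Submodule.span ℝ {v} = W := by
        apply Submodule.eq_of_le_of_finrank_le
          ((Submodule.span_singleton_le_iff_mem _ _).mpr hvW)
        rw [finrank_span_singleton hvne]
        exact hWrank
      have hcoef : ∀ z ∈ F, ∃ s : ℝ, z - x = s • v := by
        intro z hz
        have hzW : z - x ∈ W := Submodule.subset_span ⟨z, hz, rfl⟩
        rw [← hspan, Submodule.mem_span_singleton] at hzW
        obtain ⟨s, hs⟩ := hzW
        exact ⟨s, hs.symm⟩
      obtain ⟨t, hd⟩ : ∃ t : ℝ, d = t • v := by
        have hdW' : d ∈ W := hdW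
        rw [← hspan, Submodule.mem_span_singleton] at hdW'
        obtain ⟨t, ht⟩ := hdW'
        exact ⟨t, ht.symm⟩
      have feas : ∀ t : ℝ, 0 ≤ t → t • v ∈ TangCone x F := by
        intro t ht
        apply subset_closure
        rcases eq_or_lt_of_le ht with h | h
        · exact ⟨1, one_pos, by simp [← h, hxF]⟩
        · refine ⟨t⁻¹, inv_pos.mpr h, ?_⟩
          rw [smul_smul, inv_mul_cancel₀ h.ne', one_smul, hv]
          simpa using hy0F
      by_cases hneg : ∃ z ∈ F, ∃ s : ℝ, z - x = s • v ∧ s < 0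
      · obtain ⟨z, hzF, s, hzs, hs⟩ := hneg
        rcases le_or_gt 0 t with ht | ht
        · rw [hd]; exact feas t ht
        · rw [hd]
          apply subset_closure
          refine ⟨s / t, div_pos_of_neg_of_neg hs ht, ?_⟩
          rw [smul_smul, div_mul_cancel₀ _ ht.ne, ← hzs]
          simpa using hzF
      · push_neg at hneg
        have hnn : ∀ z ∈ F, ∃ s : ℝ, z - x = s • v ∧ 0 ≤ s := by
          intro z hz
          obtain ⟨s, hs⟩ := hcoef z hz
          exact ⟨s, hs, hneg z hz s hs⟩
        have hface : IsProperFaceOf {x} C := by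
          refine ⟨⟨Set.singleton_subset_iff.mpr (hFC hxF), convex_singleton x,
            isClosed_singleton, ?_⟩, Set.singleton_nonempty x, ?_⟩
          · intro x' hx' y hy z hz hseg
            have hx'x : x' = x := hx'
            subst hx'x
            obtain ⟨hyF, hzF⟩ := hFext x' hxF y hy z hz hseg
            obtain ⟨a, ha, hanneg⟩ := hnn y hyF
            obtain ⟨b, hb, hbnneg⟩ := hnn z hzF
            obtain ⟨α, β, hα, hβ, hαβ, hcomb⟩ := hseg
            have hzero : (α * a + β * b) • v = 0 := by
              have h1 : α • (y - x') + β • (z - x') = 0 := by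
                have h2 : α • (y - x') + β • (z - x') = (α • y + β • z) - (α + β) • x' := by
                  module
                rw [h2, hcomb, hαβ, one_smul, sub_self]
              rw [ha, hb, smul_smul, smul_smul, ← add_smul] at h1
              exact h1
            have hab : α * a + β * b = 0 := by
              rcases smul_eq_zero.mp hzero with h | h
              · exact h
              · exact absurd h hvne
            have ha0 : a = 0 := by nlinarith
            have hb0 : b = 0 := by nlinarith
            constructor
            · have : y - x' = 0 := by rw [ha, ha0, zero_smul]
              exact sub_eq_zero.mp this
            · have : z - x' = 0 := by rw [hb, hb0, zero_smul]
              exact sub_eq_zero.mp this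
          · intro h
            have hy0C := hFC hy0F
            rw [← h] at hy0C
            exact hy0ne hy0C
        obtain ⟨p, hp⟩ := hfe {x} hface
        have hxmem : x ∈ {z ∈ C | ∀ y ∈ C, ⟪p, y⟫ ≤ ⟪p, z⟫} := by
          rw [← hp]; rfl
        obtain ⟨hxC, hmax⟩ := hxmem
        have hstrict : ⟪p, y0⟫ < ⟪p, x⟫ := by
          rcases lt_or_eq_of_le (hmax y0 (hFC hy0F)) with h | h
          · exact h
          · exfalso
            have : y0 ∈ ({x} : Set (EuclideanSpace ℝ (Fin n))) := by
              rw [hp]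
              exact ⟨hFC hy0F, fun z hz => h ▸ hmax z hz⟩
            exact hy0ne this
        have hpv : ⟪p, v⟫ < 0 := by
          rw [hv, inner_sub_right]; linarith
        have hpd : ⟪p, d⟫ ≤ 0 := by
          have hcl : TangCone x C ⊆ {e : EuclideanSpace ℝ (Fin n) | ⟪p, e⟫ ≤ 0} := by
            apply closure_minimal
            · rintro e ⟨ε, hε, he⟩
              have h1 := hmax _ he
              rw [inner_add_right, real_inner_smul_right] at h1
              have h2 : ε * ⟪p, e⟫ ≤ ε * 0 := by linarith
              exact le_of_mul_le_mul_left h2 hε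
            · exact isClosed_le (continuous_const.inner continuous_id) continuous_const
          exact hcl hdT
        have ht : 0 ≤ t := by
          rw [hd, real_inner_smul_right] at hpd
          by_contra hlt
          exact absurd hpd (not_le.mpr (mul_pos_of_neg_of_neg (not_le.mp hlt) hpv))
        rw [hd]
        exact feas t ht
    · push_neg at hex
      have hW : W ≤ ⊥ := by
        apply Submodule.span_le.mpr
        rintro _ ⟨y, hy, rfl⟩
        simp [hex y hy]
      have hd0 : d = 0 := hW hdW
      rw [hd0]
      exact subset_closure ⟨1, one_pos, by simpa using hxF⟩
  · intro d hd
    constructor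
    · have hsub : TangCone x F ⊆ (W : Set (EuclideanSpace ℝ (Fin n))) := by
        apply closure_minimal
        · rintro e ⟨ε, hε, he⟩
          have hm : ε • e ∈ W := Submodule.subset_span ⟨x + ε • e, he, add_sub_cancel_left x _⟩
          have h2 := W.smul_mem ε⁻¹ hm
          rwa [smul_smul, inv_mul_cancel₀ hε.ne', one_smul] at h2
        · exact W.closed_of_finiteDimensional
      exact hsub hd
    · refine closure_mono ?_ hd
      rintro e ⟨ε, hε, he⟩
      exact ⟨ε, hε, hFC he⟩
end

section
/- Let K ⊆ ℝⁿ be a closed convex cone that is facially exposed. Then for every face F of K of the form F = cone{p₁, p₂} with p₁, p₂ ∈ ℝⁿ linearly independent, the set K* + F^⊥ is closed. -/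
/- Common definitions following "Facially Dual Complete (Nice) cones and
lexicographic tangents" by V. Roshchina and L. Tunçel. -/

open Set Filter
open scoped Pointwise

local notation "⟪" x ", " y "⟫" => @inner ℝ _ _ x y

variable {E : Type*} [NormedAddCommGroup E] [InnerProductSpace ℝ E]

/-- `K` is facially exposed as a cone: every proper face is exposed by some `s ∈ K*`. -/
def ConeFaciallyExposed {E : Type*} [NormedAddCommGroup E] [InnerProductSpace ℝ E]
    (K : Set E) : Prop :=
  ∀ F : Set E, IsProperFaceOf F K → ∃ s ∈ DualCone' K, F = K ∩ {x : E | ⟪s, x⟫ = 0}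

/-- Auxiliary: for a facially exposed cone `K` with face `F = cone{p,q}` with
`p, q` "independent", there is an exposing vector for the ray of `p` that is strictly
positive on `q`. -/
lemma exposing_vector {n : ℕ} (K : Set (EuclideanSpace ℝ (Fin n)))
    (hfe : ConeFaciallyExposed K)
    (p q : EuclideanSpace ℝ (Fin n))
    (hcoeff : ∀ a b : ℝ, a • p + b • q = 0 → a = 0 ∧ b = 0)
    (F : Set (EuclideanSpace ℝ (Fin n))) (hF : IsFaceOf F K)
    (hFeq : F = {v : EuclideanSpace ℝ (Fin n) |
      ∃ a b : ℝ, 0 ≤ a ∧ 0 ≤ b ∧ v = a • p + b • q}) :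
    ∃ e ∈ DualCone' K, ⟪e, p⟫ = 0 ∧ 0 < ⟪e, q⟫ := by
  have hp0 : p ≠ 0 := by
    intro h
    have := (hcoeff 1 0 (by simp [h])).1
    norm_num at this
  set R : Set (EuclideanSpace ℝ (Fin n)) := {x | ∃ c : ℝ, 0 ≤ c ∧ x = c • p} with hR
  have hRF : R ⊆ F := by
    rintro x ⟨c, hc, rfl⟩
    rw [hFeq]; exact ⟨c, 0, hc, le_refl 0, by simp⟩
  have hRK : R ⊆ K := hRF.trans hF.1
  have hpR : p ∈ R := ⟨1, zero_le_one, (one_smul ℝ p).symm⟩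
  have hqK : q ∈ K := hF.1 (by rw [hFeq]; exact ⟨0, 1, le_refl 0, zero_le_one, by simp⟩)
  have hqR : q ∉ R := by
    rintro ⟨c, hc, hq⟩
    have := (hcoeff c (-1) (by rw [hq]; module)).2
    norm_num at this
  have hpp : (0 : ℝ) < ⟪p, p⟫ := by rw [real_inner_self_eq_norm_sq]; exact pow_pos (norm_pos_iff.mpr hp0) 2
  have hRclosed : IsClosed R := by
    have hReq : R = (Submodule.span ℝ {p} : Set (EuclideanSpace ℝ (Fin n)))
        ∩ {x | 0 ≤ ⟪p, x⟫} := by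
      ext x
      constructor
      · rintro ⟨c, hc, rfl⟩
        refine ⟨Submodule.smul_mem _ _ (Submodule.mem_span_singleton_self p), ?_⟩
        rw [Set.mem_setOf_eq, real_inner_smul_right]
        nlinarith
      · rintro ⟨hx, hx2⟩
        obtain ⟨c, rfl⟩ := Submodule.mem_span_singleton.mp hx
        rw [Set.mem_setOf_eq, real_inner_smul_right] at hx2
        refine ⟨c, ?_, rfl⟩
        nlinarith
    rw [hReq]
    exact (Submodule.span ℝ {p}).closed_of_finiteDimensional.inter
      (isClosed_le continuous_const (Continuous.inner continuous_const continuous_id))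
  have hRconv : Convex ℝ R := by
    rintro x ⟨c, hc, rfl⟩ y ⟨d, hd, rfl⟩ a b ha hb hab
    exact ⟨a * c + b * d, by positivity, by module⟩
  have hRface : IsFaceOf R K := by
    refine ⟨hRK, hRconv, hRclosed, ?_⟩
    intro x hx y hy z hz hseg
    obtain ⟨hyF, hzF⟩ := hF.2.2.2 x (hRF hx) y hy z hz hseg
    rw [hFeq] at hyF hzF
    obtain ⟨a₁, b₁, ha₁, hb₁, rfl⟩ := hyF
    obtain ⟨a₂, b₂, ha₂, hb₂, rfl⟩ := hzF
    obtain ⟨c, hc, hx'⟩ := hx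
    obtain ⟨t, u, ht, hu, htu, hseq⟩ := hseg
    rw [hx'] at hseq
    have h0 : (t * a₁ + u * a₂ - c) • p + (t * b₁ + u * b₂) • q = 0 := by
      linear_combination (norm := module) hseq
    have hb0 := (hcoeff _ _ h0).2
    have hb₁0 : b₁ = 0 := by nlinarith
    have hb₂0 : b₂ = 0 := by nlinarith
    constructor
    · exact ⟨a₁, ha₁, by rw [hb₁0]; simp⟩
    · exact ⟨a₂, ha₂, by rw [hb₂0]; simp⟩
  have hRproper : IsProperFaceOf R K := by
    refine ⟨hRface, ⟨0, 0, le_refl 0, by simp⟩, ?_⟩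
    intro h
    exact hqR (h ▸ hqK)
  obtain ⟨e, heK, heq⟩ := hfe R hRproper
  have hep : ⟪e, p⟫ = 0 := by
    have := hpR
    rw [heq] at this
    exact this.2
  refine ⟨e, heK, hep, ?_⟩
  rcases lt_or_eq_of_le (heK q hqK) with h | h
  · exact h
  · exfalso
    exact hqR (by rw [heq]; exact ⟨hqK, h.symm⟩)

/-- **Proposition.** Let `K ⊆ ℝⁿ` be a facially exposed closed convex cone. For every face
`F = cone{p₁, p₂}` of `K` with `p₁, p₂` linearly independent, the set `K* + F^⊥` is closed. -/
theorem two_generator_face_sum_closed (n : ℕ) (K : Set (EuclideanSpace ℝ (Fin n)))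
    (hKclosed : IsClosed K) (hKconv : Convex ℝ K) (hKcone : IsConeSet K)
    (hfe : ConeFaciallyExposed K)
    (p₁ p₂ : EuclideanSpace ℝ (Fin n)) (hli : LinearIndependent ℝ ![p₁, p₂])
    (F : Set (EuclideanSpace ℝ (Fin n))) (hF : IsFaceOf F K)
    (hFeq : F = {v : EuclideanSpace ℝ (Fin n) |
      ∃ a b : ℝ, 0 ≤ a ∧ 0 ≤ b ∧ v = a • p₁ + b • p₂}) :
    IsClosed (DualCone' K + PerpOf F) := by
  have hcoeff : ∀ a b : ℝ, a • p₁ + b • p₂ = 0 → a = 0 ∧ b = 0 := by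
    intro a b hab
    have h := Fintype.linearIndependent_iff.mp hli ![a, b]
      (by simpa [Fin.sum_univ_two] using hab)
    exact ⟨h 0, h 1⟩
  have hcoeff' : ∀ a b : ℝ, a • p₂ + b • p₁ = 0 → a = 0 ∧ b = 0 := by
    intro a b hab
    have := hcoeff b a (by linear_combination (norm := module) hab)
    exact ⟨this.2, this.1⟩
  have hFeq' : F = {v : EuclideanSpace ℝ (Fin n) |
      ∃ a b : ℝ, 0 ≤ a ∧ 0 ≤ b ∧ v = a • p₂ + b • p₁} := by
    rw [hFeq]; ext v
    constructor
    · rintro ⟨a, b, ha, hb, rfl⟩; exact ⟨b, a, hb, ha, by module⟩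
    · rintro ⟨a, b, ha, hb, rfl⟩; exact ⟨b, a, hb, ha, by module⟩
  obtain ⟨e₁, he₁K, he₁p₁, he₁p₂⟩ := exposing_vector K hfe p₁ p₂ hcoeff F hF hFeq
  obtain ⟨e₂, he₂K, he₂p₂, he₂p₁⟩ := exposing_vector K hfe p₂ p₁ hcoeff' F hF hFeq'
  have hp₁F : p₁ ∈ F := by rw [hFeq]; exact ⟨1, 0, zero_le_one, le_refl 0, by simp⟩
  have hp₂F : p₂ ∈ F := by rw [hFeq]; exact ⟨0, 1, le_refl 0, zero_le_one, by simp⟩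
  have key : DualCone' K + PerpOf F =
      {s : EuclideanSpace ℝ (Fin n) | 0 ≤ ⟪s, p₁⟫} ∩ {s | 0 ≤ ⟪s, p₂⟫} := by
    apply Set.Subset.antisymm
    · rintro x ⟨u, hu, v, hv, rfl⟩
      have hv₁ : ⟪v, p₁⟫ = 0 := hv p₁ hp₁F
      have hv₂ : ⟪v, p₂⟫ = 0 := hv p₂ hp₂F
      constructor
      · show (0 : ℝ) ≤ ⟪u + v, p₁⟫
        rw [inner_add_left, hv₁, add_zero]
        exact hu p₁ (hF.1 hp₁F)
      · show (0 : ℝ) ≤ ⟪u + v, p₂⟫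
        rw [inner_add_left, hv₂, add_zero]
        exact hu p₂ (hF.1 hp₂F)
    · rintro s ⟨hs₁, hs₂⟩
      simp only [Set.mem_setOf_eq] at hs₁ hs₂
      set t := (⟪s, p₁⟫ / ⟪e₂, p₁⟫) • e₂ + (⟪s, p₂⟫ / ⟪e₁, p₂⟫) • e₁ with ht
      have htK : t ∈ DualCone' K := by
        intro x hx
        have h1 := he₁K x hx
        have h2 := he₂K x hx
        have hd1 := div_nonneg hs₁ he₂p₁.le
        have hd2 := div_nonneg hs₂ he₁p₂.le
        rw [ht, inner_add_left, real_inner_smul_left, real_inner_smul_left]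
        nlinarith
      have ht₁ : ⟪t, p₁⟫ = ⟪s, p₁⟫ := by
        rw [ht, inner_add_left, real_inner_smul_left, real_inner_smul_left, he₁p₁,
          mul_zero, add_zero, div_mul_cancel₀ _ (ne_of_gt he₂p₁)]
      have ht₂ : ⟪t, p₂⟫ = ⟪s, p₂⟫ := by
        rw [ht, inner_add_left, real_inner_smul_left, real_inner_smul_left, he₂p₂,
          mul_zero, zero_add, div_mul_cancel₀ _ (ne_of_gt he₁p₂)]
      refine ⟨t, htK, s - t, ?_, add_sub_cancel t s⟩
      intro x hx
      rw [hFeq] at hx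
      obtain ⟨a, b, ha, hb, rfl⟩ := hx
      rw [inner_add_right, real_inner_smul_right, real_inner_smul_right,
        inner_sub_left, inner_sub_left, ht₁, ht₂]
      ring
  rw [key]
  exact (isClosed_le continuous_const (Continuous.inner continuous_id continuous_const)).inter
    (isClosed_le continuous_const (Continuous.inner continuous_id continuous_const))
end

section
/- Let C ⊂ ℝ³ be the convex hull of the four curves γ₁(t) = (0, −sin t, cos t − 1), γ₂(t) = (0, cos t − 1, −sin t), γ₃(t) = (−sin t, 1 − cos t, 0), γ₄(t) = (cos t − 1, sin t, 0), each for t ∈ [0, π/4], and let F = conv{γ₃, γ₄} (a face of C containing x = (0,0,0)). Then C fails tangential exposure at x for F: the vector g = (0, −1, 0) belongs to T(x;C) ∩ span(F) but g ∉ T(x;F); in particular, ⟨g, γ₃(t)⟩ ≤ 0 and ⟨g, γ₄(t)⟩ ≤ 0 for all t ∈ [0, π/4], while g = lim_{s↓0} (0, −sin s, cos s − 1)/s. -/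
/-!
The face `F` is exposed by the height `z`: it is nonpositive on all four curves and vanishes
exactly on `γ₃`, `γ₄` and at the common starting point `0` of all curves. The curve `γ₁` leaves
`0` with velocity `g = (0, -1, 0)`, so `g` is tangent to `C`. On the other hand `⟨g, ·⟩ ≤ 0` on
`γ₃` and `γ₄`, hence on `F`: `g` is a normal vector to `F` at `0`, and as `⟨g, g⟩ > 0` it cannot
be tangent to `F`. That `F` is closed comes from Carathéodory's theorem: in finite dimensions the
convex hull of a compact set is compact.
-/

/- Common definitions following "Facially Dual Complete (Nice) cones and
lexicographic tangents" by V. Roshchina and L. Tunçel. -/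

open Set Filter
open scoped Pointwise

local notation "⟪" x ", " y "⟫" => @inner ℝ _ _ x y

variable {E : Type*} [NormedAddCommGroup E] [InnerProductSpace ℝ E]

open scoped Topology

section ConvexGeometry

variable {V : Type*}

theorem Function.Embedding.sum_extend_zero {ι κ M : Type*} [Fintype ι] [Fintype κ]
    [AddCommMonoid M] (e : ι ↪ κ) (f : ι → M) : ∑ j, Function.extend e f 0 j = ∑ i, f i := by
  classical
  rw [← Finset.sum_subset (Finset.subset_univ (Finset.univ.map e)), Finset.sum_map]
  · exact Finset.sum_congr rfl fun i _ => e.injective.extend_apply f 0 i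
  · intro j _ hj
    refine Function.extend_apply' _ _ _ fun ⟨i, hi⟩ => hj ?_
    simp [← hi]

theorem IsCompact.convexHull_of_finiteDimensional [NormedAddCommGroup V] [NormedSpace ℝ V]
    [FiniteDimensional ℝ V] {s : Set V} (hs : IsCompact s) : IsCompact (convexHull ℝ s) := by
  rcases s.eq_empty_or_nonempty with rfl | ⟨x₀, hx₀⟩
  · simp
  let N := Module.finrank ℝ V + 1
  let Φ : (Fin N → ℝ) × (Fin N → V) → V := fun p => ∑ i, p.1 i • p.2 i
  suffices convexHull ℝ s = Φ '' (stdSimplex ℝ (Fin N) ×ˢ univ.pi fun _ => s) from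
    this ▸ ((isCompact_stdSimplex _ _).prod (isCompact_univ_pi fun _ => hs)).image (by fun_prop)
  refine Subset.antisymm (fun x hx => ?_) ?_
  · -- Carathéodory: `x` is a convex combination of at most `N` points of `s`.
    obtain ⟨ι, _, z, w, hzs, hz, hw0, hw1, rfl⟩ := eq_pos_convex_span_of_mem_convexHull hx
    have hcard : Fintype.card ι ≤ N :=
      hz.card_le_finrank_succ.trans (by simpa [N] using Submodule.finrank_le _)
    let e : ι ↪ Fin N := (Fintype.equivFin ι).toEmbedding.trans (Fin.castLEEmb hcard)
    have extend_cases : ∀ j, (∃ i, e i = j) ∨ ∀ i, e i ≠ j := fun j =>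
      (em (∃ i, e i = j)).imp_right not_exists.mp
    refine ⟨(Function.extend e w 0, Function.extend e z fun _ => x₀),
      ⟨⟨fun j => ?_, by rw [e.sum_extend_zero, hw1]⟩, fun j _ => ?_⟩, ?_⟩
    · rcases extend_cases j with ⟨i, rfl⟩ | h
      · simpa [e.injective.extend_apply] using (hw0 i).le
      · simp [Function.extend_apply' _ _ _ fun ⟨i, hi⟩ => h i hi]
    · rcases extend_cases j with ⟨i, rfl⟩ | h
      · simpa [e.injective.extend_apply] using hzs (mem_range_self i)
      · simpa [Function.extend_apply' _ _ _ fun ⟨i, hi⟩ => h i hi] using hx₀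
    · simp only [Φ]
      rw [← e.sum_extend_zero]
      refine Finset.sum_congr rfl fun j _ => ?_
      rcases extend_cases j with ⟨i, rfl⟩ | h
      · simp [e.injective.extend_apply]
      · simp [Function.extend_apply' _ _ _ fun ⟨i, hi⟩ => h i hi]
  · rintro _ ⟨⟨w, z⟩, ⟨hw, hz⟩, rfl⟩
    simpa [Finset.centerMass_eq_of_sum_1 _ _ hw.2] using
      Finset.centerMass_mem_convexHull (Finset.univ : Finset (Fin N))
        (fun i _ => hw.1 i) (hw.2 ▸ zero_lt_one) (fun i _ => hz i (mem_univ i))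

theorem IsExtreme.isFaceOf [NormedAddCommGroup V] [InnerProductSpace ℝ V] {F C : Set V}
    (hext : IsExtreme ℝ C F) (hconv : Convex ℝ F) (hclosed : IsClosed F) : IsFaceOf F C :=
  ⟨hext.1, hconv, hclosed, fun _ hx _ hy _ hz hseg =>
    ⟨hext.left_mem_of_mem_openSegment hy hz hx hseg,
      hext.right_mem_of_mem_openSegment hy hz hx hseg⟩⟩

theorem mem_convexHull_sep_of_apply_eq_zero [AddCommGroup V] [Module ℝ V] {S : Set V}
    {ℓ : V →ₗ[ℝ] ℝ} (hS : ∀ x ∈ S, ℓ x ≤ 0) {y : V} (hy : y ∈ convexHull ℝ S) (hy0 : ℓ y = 0) :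
    y ∈ convexHull ℝ {x ∈ S | ℓ x = 0} := by
  set H := convexHull ℝ {x ∈ S | ℓ x = 0}
  have hH : ∀ x ∈ H, ℓ x = 0 :=
    convexHull_min (fun x hx => hx.2) (convex_hyperplane ℓ.isLinear 0)
  -- `{ℓ < 0} ∪ H` is convex and contains `S`.
  suffices convexHull ℝ S ⊆ {x | ℓ x < 0} ∪ H from (this hy).resolve_left hy0.not_lt
  refine convexHull_min (fun x hx => (hS x hx).lt_or_eq.imp id fun h =>
    subset_convexHull ℝ _ ⟨hx, h⟩) ?_
  intro x₁ hx₁ x₂ hx₂ a b ha hb hab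
  have hle : ∀ x ∈ {x | ℓ x < 0} ∪ H, ℓ x ≤ 0 := fun x hx =>
    hx.elim (fun h => le_of_lt h) fun h => (hH x h).le
  rcases ha.lt_or_eq with ha | rfl
  · rcases hb.lt_or_eq with hb | rfl
    · have hcombo : ℓ (a • x₁ + b • x₂) = a * ℓ x₁ + b * ℓ x₂ := by simp
      rcases hx₁ with h₁ | h₁
      · exact .inl <| show ℓ (a • x₁ + b • x₂) < 0 by nlinarith [hle x₂ hx₂, show ℓ x₁ < 0 from h₁]
      rcases hx₂ with h₂ | h₂
      · exact .inl <| show ℓ (a • x₁ + b • x₂) < 0 by nlinarith [hH x₁ h₁, show ℓ x₂ < 0 from h₂]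
      · exact .inr (convex_convexHull ℝ _ h₁ h₂ ha.le hb.le hab)
    · simpa [show a = 1 by linarith] using hx₁
  · simpa [show b = 1 by linarith] using hx₂

theorem isExtreme_convexHull_sep [AddCommGroup V] [Module ℝ V] [TopologicalSpace V] {S : Set V}
    {ℓ : StrongDual ℝ V} (hS : ∀ x ∈ S, ℓ x ≤ 0) (hS0 : ∃ x ∈ S, ℓ x = 0) :
    IsExtreme ℝ (convexHull ℝ S) (convexHull ℝ {x ∈ S | ℓ x = 0}) := by
  have hle : ∀ y ∈ convexHull ℝ S, ℓ y ≤ 0 :=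
    convexHull_min hS (convex_halfSpace_le ℓ.toLinearMap.isLinear 0)
  have heq : ∀ y ∈ convexHull ℝ {x ∈ S | ℓ x = 0}, ℓ y = 0 :=
    convexHull_min (fun x hx => hx.2) (convex_hyperplane ℓ.toLinearMap.isLinear 0)
  suffices convexHull ℝ {x ∈ S | ℓ x = 0} = ℓ.toExposed (convexHull ℝ S) from
    this ▸ ContinuousLinearMap.toExposed.isExposed.isExtreme
  obtain ⟨x₀, hx₀, hx₀0⟩ := hS0
  refine Subset.antisymm (fun y hy => ⟨convexHull_mono (fun x hx => hx.1) hy, fun z hz => ?_⟩)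
    fun y ⟨hy, hmax⟩ => mem_convexHull_sep_of_apply_eq_zero (ℓ := ℓ.toLinearMap) hS hy ?_
  · exact (hle z hz).trans (heq y hy).ge
  · exact (hle y hy).antisymm (hx₀0 ▸ hmax x₀ (subset_convexHull ℝ S hx₀))

theorem inner_nonpos_of_mem_normalCone'_of_mem_tangCone [NormedAddCommGroup V]
    [InnerProductSpace ℝ V] {C : Set V} {x v d : V} (hv : v ∈ NormalCone' x C)
    (hd : d ∈ TangCone x C) : ⟪v, d⟫ ≤ 0 := by
  refine closure_minimal (s := {d | ∃ ε : ℝ, 0 < ε ∧ x + ε • d ∈ C}) (t := {d | ⟪v, d⟫ ≤ 0})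
    (fun d ⟨ε, hε, hxd⟩ => ?_) (isClosed_le (by fun_prop) continuous_const) hd
  have := hv _ hxd
  rw [add_sub_cancel_left, inner_smul_right] at this
  exact nonpos_of_mul_nonpos_right this hε

theorem mem_normalCone'_convexHull [NormedAddCommGroup V] [InnerProductSpace ℝ V] {S : Set V}
    {x v : V} (hv : v ∈ NormalCone' x S) : v ∈ NormalCone' x (convexHull ℝ S) := by
  have hconv : Convex ℝ {y | ⟪v, y - x⟫ ≤ 0} := by
    simpa only [inner_sub_right, sub_nonpos, innerₛₗ_apply_apply] using
      convex_halfSpace_le (innerₛₗ ℝ v).isLinear ⟪v, x⟫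
  exact convexHull_min hv hconv

theorem mem_tangCone_of_tendsto [NormedAddCommGroup V] [InnerProductSpace ℝ V] {C : Set V}
    {x d : V} {f : ℝ → V} (hfC : ∀ᶠ s in 𝓝[>] 0, f s ∈ C)
    (hf : Tendsto (fun s => s⁻¹ • (f s - x)) (𝓝[>] 0) (𝓝 d)) : d ∈ TangCone x C := by
  refine mem_closure_of_tendsto hf ?_
  filter_upwards [hfC, self_mem_nhdsWithin] with s hs (hpos : 0 < s)
  exact ⟨s, hpos, by rwa [smul_inv_smul₀ hpos.ne', add_sub_cancel]⟩

end ConvexGeometry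

noncomputable section TorusExample

/-- Shorthand for vectors in `ℝ³`. -/
def v3 (a b c : ℝ) : EuclideanSpace ℝ (Fin 3) := WithLp.toLp 2 ![a, b, c]

def γ₁ (t : ℝ) : EuclideanSpace ℝ (Fin 3) := v3 0 (-Real.sin t) (Real.cos t - 1)
def γ₂ (t : ℝ) : EuclideanSpace ℝ (Fin 3) := v3 0 (Real.cos t - 1) (-Real.sin t)
def γ₃ (t : ℝ) : EuclideanSpace ℝ (Fin 3) := v3 (-Real.sin t) (1 - Real.cos t) 0
def γ₄ (t : ℝ) : EuclideanSpace ℝ (Fin 3) := v3 (Real.cos t - 1) (Real.sin t) 0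

/-- `C = conv{γ₁, γ₂, γ₃, γ₄}`, each curve taken over `t ∈ [0, π/4]`. -/
def Cset : Set (EuclideanSpace ℝ (Fin 3)) :=
  convexHull ℝ (γ₁ '' Icc 0 (Real.pi / 4) ∪ γ₂ '' Icc 0 (Real.pi / 4) ∪
    γ₃ '' Icc 0 (Real.pi / 4) ∪ γ₄ '' Icc 0 (Real.pi / 4))

/-- `F = conv{γ₃, γ₄}`. -/
def Fface : Set (EuclideanSpace ℝ (Fin 3)) :=
  convexHull ℝ (γ₃ '' Icc 0 (Real.pi / 4) ∪ γ₄ '' Icc 0 (Real.pi / 4))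

local notation "𝕀" => Icc (0 : ℝ) (Real.pi / 4)

def Fgen : Set (EuclideanSpace ℝ (Fin 3)) := γ₃ '' 𝕀 ∪ γ₄ '' 𝕀

def Cgen : Set (EuclideanSpace ℝ (Fin 3)) := γ₁ '' 𝕀 ∪ γ₂ '' 𝕀 ∪ Fgen

theorem Cset_eq_convexHull_Cgen : Cset = convexHull ℝ Cgen := by
  rw [Cset, Cgen, Fgen, union_assoc]

theorem sin_nonneg_of_mem_Icc {t : ℝ} (ht : t ∈ 𝕀) : 0 ≤ Real.sin t :=
  Real.sin_nonneg_of_nonneg_of_le_pi ht.1 (by linarith [Real.pi_pos, ht.2])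

theorem eq_zero_of_mem_Icc_of_cos_eq_one {t : ℝ} (ht : t ∈ 𝕀) (h : Real.cos t = 1) : t = 0 :=
  (Real.cos_eq_one_iff_of_lt_of_lt (by linarith [Real.pi_pos, ht.1])
    (by linarith [Real.pi_pos, ht.2])).1 h

theorem eq_zero_of_mem_Icc_of_sin_eq_zero {t : ℝ} (ht : t ∈ 𝕀) (h : Real.sin t = 0) : t = 0 :=
  (Real.sin_eq_zero_iff_of_lt_of_lt (by linarith [Real.pi_pos, ht.1])
    (by linarith [Real.pi_pos, ht.2])).1 h

theorem γ₁_zero : γ₁ 0 = 0 := by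
  ext i; fin_cases i <;> simp [γ₁, v3]

theorem γ₂_zero : γ₂ 0 = 0 := by
  ext i; fin_cases i <;> simp [γ₂, v3]

theorem γ₃_zero : γ₃ 0 = 0 := by
  ext i; fin_cases i <;> simp [γ₃, v3]

@[fun_prop]
theorem Continuous.v3 {f g h : ℝ → ℝ} (hf : Continuous f) (hg : Continuous g)
    (hh : Continuous h) : Continuous fun t => v3 (f t) (g t) (h t) :=
  (PiLp.continuous_toLp 2 _).comp <| continuous_pi fun i => by fin_cases i <;> assumption

theorem zero_mem_Fgen : (0 : EuclideanSpace ℝ (Fin 3)) ∈ Fgen :=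
  .inl ⟨0, ⟨le_rfl, by positivity⟩, γ₃_zero⟩

theorem Cgen_apply_two_nonpos : ∀ x ∈ Cgen, x 2 ≤ 0 := by
  rintro _ (((⟨t, ht, rfl⟩ | ⟨t, ht, rfl⟩) | ⟨t, ht, rfl⟩ | ⟨t, ht, rfl⟩))
  · simpa [γ₁, v3] using Real.cos_le_one t
  · simpa [γ₂, v3] using sin_nonneg_of_mem_Icc ht
  all_goals simp [γ₃, γ₄, v3]

theorem Cgen_sep_eq : {x ∈ Cgen | x 2 = 0} = Fgen := by
  refine Subset.antisymm ?_ fun x hx => ⟨.inr hx, ?_⟩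
  · rintro _ ⟨((⟨t, ht, rfl⟩ | ⟨t, ht, rfl⟩) | hx), h⟩
    · obtain rfl : t = 0 :=
        eq_zero_of_mem_Icc_of_cos_eq_one ht (by simpa [γ₁, v3, sub_eq_zero] using h)
      exact γ₁_zero ▸ zero_mem_Fgen
    · obtain rfl : t = 0 := eq_zero_of_mem_Icc_of_sin_eq_zero ht (by simpa [γ₂, v3] using h)
      exact γ₂_zero ▸ zero_mem_Fgen
    · exact hx
  · rcases hx with ⟨t, -, rfl⟩ | ⟨t, -, rfl⟩ <;> simp [γ₃, γ₄, v3]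

theorem isFaceOf_Fface : IsFaceOf Fface Cset := by
  have hext : IsExtreme ℝ Cset Fface := by
    rw [Cset_eq_convexHull_Cgen, Fface, ← Fgen, ← Cgen_sep_eq]
    exact isExtreme_convexHull_sep (ℓ := EuclideanSpace.proj (2 : Fin 3)) Cgen_apply_two_nonpos
      ⟨0, .inr zero_mem_Fgen, rfl⟩
  have hcompact : IsCompact Fgen :=
    (isCompact_Icc.image (by unfold γ₃; fun_prop)).union
      (isCompact_Icc.image (by unfold γ₄; fun_prop))
  exact hext.isFaceOf (convex_convexHull ℝ _) hcompact.convexHull_of_finiteDimensional.isClosed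

theorem inner_v3 (a b c a' b' c' : ℝ) : ⟪v3 a b c, v3 a' b' c'⟫ = a * a' + b * b' + c * c' := by
  simp [v3, PiLp.inner_apply, Fin.sum_univ_three, mul_comm]

theorem inner_γ₃_nonpos (t : ℝ) : ⟪v3 0 (-1) 0, γ₃ t⟫ ≤ 0 := by
  simpa [γ₃, inner_v3] using Real.cos_le_one t

theorem inner_γ₄_nonpos {t : ℝ} (ht : t ∈ 𝕀) : ⟪v3 0 (-1) 0, γ₄ t⟫ ≤ 0 := by
  simpa [γ₄, inner_v3] using sin_nonneg_of_mem_Icc ht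

theorem mem_normalCone'_Fface : v3 0 (-1) 0 ∈ NormalCone' 0 Fface := by
  refine mem_normalCone'_convexHull ?_
  rintro _ (⟨t, ht, rfl⟩ | ⟨t, ht, rfl⟩) <;> rw [sub_zero]
  exacts [inner_γ₃_nonpos t, inner_γ₄_nonpos ht]

theorem γ₁_eq (t : ℝ) : γ₁ t = Real.sin t • v3 0 (-1) 0 + (Real.cos t - 1) • v3 0 0 1 := by
  ext i; fin_cases i <;> simp [γ₁, v3]

theorem hasDerivAt_γ₁_zero : HasDerivAt γ₁ (v3 0 (-1) 0) 0 := by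
  have h := ((Real.hasDerivAt_sin 0).smul_const (v3 0 (-1) 0)).add
    (((Real.hasDerivAt_cos 0).sub_const 1).smul_const (v3 0 0 1))
  rw [Real.cos_zero, Real.sin_zero, neg_zero, zero_smul, add_zero, one_smul] at h
  exact h.congr_of_eventuallyEq (.of_forall γ₁_eq)

theorem tendsto_inv_smul_γ₁ :
    Tendsto (fun s : ℝ => s⁻¹ • γ₁ s) (𝓝[>] 0) (𝓝 (v3 0 (-1) 0)) := by
  have h := hasDerivAt_iff_tendsto_slope.1 hasDerivAt_γ₁_zero
  refine (h.mono_left (nhdsWithin_mono _ fun s (hs : 0 < s) => hs.ne')).congr fun s => ?_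
  simp [slope_def_module, γ₁_zero]

theorem v3_mem_span_Fface : v3 0 (-1) 0 ∈ Submodule.span ℝ Fface := by
  have mem : ∀ x ∈ Fgen, x ∈ Submodule.span ℝ Fface := fun x hx =>
    Submodule.subset_span (subset_convexHull ℝ _ hx)
  have hπ : Real.pi / 4 ∈ 𝕀 := ⟨by positivity, le_rfl⟩
  -- Both curves end at `π/4`, where `sin = cos = √2/2` and `2 (√2/2)^2 = 1`.
  have hcomb : v3 0 (-1) 0 =
      (√2 / 2) • γ₃ (Real.pi / 4) + (-(1 + √2 / 2)) • γ₄ (Real.pi / 4) := by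
    have hsq : √2 ^ 2 = 2 := Real.sq_sqrt zero_le_two
    ext i; fin_cases i <;> simp [v3, γ₃, γ₄] <;> nlinarith
  rw [hcomb]
  exact add_mem (Submodule.smul_mem _ _ (mem _ (.inl ⟨_, hπ, rfl⟩)))
    (Submodule.smul_mem _ _ (mem _ (.inr ⟨_, hπ, rfl⟩)))

/-- **Example.** The set `C` fails tangential exposure at `x = 0` for the face
`F = conv{γ₃, γ₄}`: `g = (0,−1,0)` lies in `T(x;C) ∩ span F` but not in `T(x;F)`;
moreover `⟨g, γ₃(t)⟩ ≤ 0` and `⟨g, γ₄(t)⟩ ≤ 0` on `[0, π/4]`, while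
`g = lim_{s↓0} (0, −sin s, cos s − 1)/s`. -/
theorem torus_example_fails_tangential_exposure :
    IsFaceOf Fface Cset ∧ (0 : EuclideanSpace ℝ (Fin 3)) ∈ Fface ∧
    v3 0 (-1) 0 ∈ TangCone (0 : EuclideanSpace ℝ (Fin 3)) Cset ∩
      (Submodule.span ℝ Fface : Set (EuclideanSpace ℝ (Fin 3))) ∧
    v3 0 (-1) 0 ∉ TangCone (0 : EuclideanSpace ℝ (Fin 3)) Fface ∧
    (∀ t ∈ Icc (0 : ℝ) (Real.pi / 4), ⟪v3 0 (-1) 0, γ₃ t⟫ ≤ 0 ∧ ⟪v3 0 (-1) 0, γ₄ t⟫ ≤ 0) ∧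
    Tendsto (fun s : ℝ => s⁻¹ • γ₁ s) (nhdsWithin 0 (Ioi 0)) (nhds (v3 0 (-1) 0)) := by
  have hγ₁_mem : ∀ᶠ s in 𝓝[>] 0, γ₁ s ∈ Cset := by
    filter_upwards [Ioo_mem_nhdsGT (show (0 : ℝ) < Real.pi / 4 by positivity)] with s hs
    exact subset_convexHull ℝ _ (.inl (.inl (.inl ⟨s, Ioo_subset_Icc_self hs, rfl⟩)))
  have htang : v3 0 (-1) 0 ∈ TangCone 0 Cset :=
    mem_tangCone_of_tendsto hγ₁_mem (by simpa using tendsto_inv_smul_γ₁)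
  have hnot_tang : v3 0 (-1) 0 ∉ TangCone 0 Fface := fun h => by
    have := inner_nonpos_of_mem_normalCone'_of_mem_tangCone mem_normalCone'_Fface h
    rw [inner_v3] at this
    norm_num at this
  exact ⟨isFaceOf_Fface, subset_convexHull ℝ _ zero_mem_Fgen, ⟨htang, v3_mem_span_Fface⟩,
    hnot_tang, fun t ht => ⟨inner_γ₃_nonpos t, inner_γ₄_nonpos ht⟩, tendsto_inv_smul_γ₁⟩

end TorusExample
end
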